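/- Let (F₀,F₁,S) be a signal structure with private-belief CDFs G₀, G₁. Then the ratio G₁(r)/G₀(r) is non-increasing in r on the set where G₀(r) > 0, and G₁(r)/G₀(r) > 1 for all r ∈ (α⁻, α⁺). In particular, G₀(x) ≤ G₁(x) for all x, i.e., G₀ first-order stochastically dominates G₁. -/

import Mathlib

open MeasureTheory Set Filter Topology
open scoped ENNReal NNReal

noncomputable section

/-- The consumer's possible actions: buy product 0, buy product 1, or exit. -/
inductive CAction : Type
  | buy0 : CAction
  | buy1 : CAction
  | exit : CAction

instance : MeasurableSpace CAction := ⊤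

/-- A signal structure `(F₀, F₁, S)`: two mutually absolutely continuous
probability measures on a measurable space `S`. -/
structure SignalStructure (S : Type) [MeasurableSpace S] : Type where
  F0 : Measure S
  F1 : Measure S
  prob0 : IsProbabilityMeasure F0
  prob1 : IsProbabilityMeasure F1
  ac01 : F0 ≪ F1
  ac10 : F1 ≪ F0

namespace SignalStructure

variable {S : Type} [MeasurableSpace S]

/-- The reference measure `(F₀ + F₁)/2`. -/
def ref (𝒮 : SignalStructure S) : Measure S := (2 : ℝ≥0∞)⁻¹ • (𝒮.F0 + 𝒮.F1)

/-- Radon–Nikodym density of `F₀` with respect to `(F₀+F₁)/2`. -/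
def f0 (𝒮 : SignalStructure S) : S → ℝ≥0∞ := 𝒮.F0.rnDeriv 𝒮.ref

/-- Radon–Nikodym density of `F₁` with respect to `(F₀+F₁)/2`. -/
def f1 (𝒮 : SignalStructure S) : S → ℝ≥0∞ := 𝒮.F1.rnDeriv 𝒮.ref

/-- The private belief `p(s) = f₀(s)/(f₀(s)+f₁(s))`. -/
def p (𝒮 : SignalStructure S) (s : S) : ℝ :=
  (𝒮.f0 s).toReal / ((𝒮.f0 s).toReal + (𝒮.f1 s).toReal)

/-- `G₀(x) = F₀ {s | p(s) < x}`, the CDF of the private belief in state 0. -/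
def G0 (𝒮 : SignalStructure S) (x : ℝ) : ℝ := (𝒮.F0 {s | 𝒮.p s < x}).toReal

/-- `G₁(x) = F₁ {s | p(s) < x}`, the CDF of the private belief in state 1. -/
def G1 (𝒮 : SignalStructure S) (x : ℝ) : ℝ := (𝒮.F1 {s | 𝒮.p s < x}).toReal

/-- `α⁻ = inf {x | G(x) > 0}`. -/
def alphaLo (𝒮 : SignalStructure S) : ℝ := sInf {x | 0 < 𝒮.G0 x}

/-- `α⁺ = sup {x | G(x) < 1}`. -/
def alphaHi (𝒮 : SignalStructure S) : ℝ := sSup {x | 𝒮.G0 x < 1}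

/-- Signals are bounded if `α⁻ > 0` and `α⁺ < 1`. -/
def Bounded (𝒮 : SignalStructure S) : Prop := 0 < 𝒮.alphaLo ∧ 𝒮.alphaHi < 1

/-- Signals are unbounded if `α⁻ = 0` and `α⁺ = 1`. -/
def Unbounded (𝒮 : SignalStructure S) : Prop := 𝒮.alphaLo = 0 ∧ 𝒮.alphaHi = 1

/-- Assumption 1: `G₀, G₁` are differentiable on `(α⁻, α⁺)` with continuous
nonnegative derivatives `g₀, g₁ : [α⁻, α⁺] → ℝ₊`. -/
structure Assumption1 (𝒮 : SignalStructure S) (g0 g1 : ℝ → ℝ) : Prop where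
  cont0 : ContinuousOn g0 (Icc 𝒮.alphaLo 𝒮.alphaHi)
  cont1 : ContinuousOn g1 (Icc 𝒮.alphaLo 𝒮.alphaHi)
  nonneg0 : ∀ x ∈ Icc 𝒮.alphaLo 𝒮.alphaHi, 0 ≤ g0 x
  nonneg1 : ∀ x ∈ Icc 𝒮.alphaLo 𝒮.alphaHi, 0 ≤ g1 x
  hasDeriv0 : ∀ x ∈ Ioo 𝒮.alphaLo 𝒮.alphaHi, HasDerivAt 𝒮.G0 (g0 x) x
  hasDeriv1 : ∀ x ∈ Ioo 𝒮.alphaLo 𝒮.alphaHi, HasDerivAt 𝒮.G1 (g1 x) x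

/-- The signal structure exhibits vanishing likelihood: `g₁(α⁻) = g₀(α⁺) = 0`. -/
def VanishingLikelihood (𝒮 : SignalStructure S) (g0 g1 : ℝ → ℝ) : Prop :=
  g1 𝒮.alphaLo = 0 ∧ g0 𝒮.alphaHi = 0

end SignalStructure

/-- Bayesian posterior on state 0 from a prior `μ` and a private belief `q`:
`p_μ = μ q / (μ q + (1-μ)(1-q))`. -/
def posterior (μ q : ℝ) : ℝ := μ * q / (μ * q + (1 - μ) * (1 - q))

/-- The consumer's expected utility, given posterior `q` on state 0 and prices
`τ₀, τ₁`, from each action. -/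
def cUtil (q τ0 τ1 : ℝ) : CAction → ℝ
  | CAction.buy0 => q - τ0
  | CAction.buy1 => (1 - q) - τ1
  | CAction.exit => 0

/-- A consumer pure strategy: maps the posted price pair and the signal to an action. -/
abbrev CStrategy (S : Type) : Type := ℝ → ℝ → S → CAction

/-- A mixed price strategy of a firm: a Borel probability measure on `[0,1]`. -/
def IsPriceStrategy (φ : Measure ℝ) : Prop :=
  IsProbabilityMeasure φ ∧ φ (Icc (0:ℝ) 1) = 1

namespace SignalStructure

variable {S : Type} [MeasurableSpace S]

/-- The signal distribution under prior `μ`: the mixture `μ F₀ + (1-μ) F₁`. -/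
def Fmix (𝒮 : SignalStructure S) (μ : ℝ) : Measure S :=
  ENNReal.ofReal μ • 𝒮.F0 + ENNReal.ofReal (1 - μ) • 𝒮.F1

/-- The probability (under prior `μ`) that the consumer takes action `a` when the
pure prices `τ₀, τ₁` are posted. -/
def actProb (𝒮 : SignalStructure S) (μ : ℝ) (σ : CStrategy S) (τ0 τ1 : ℝ) (a : CAction) : ℝ :=
  (𝒮.Fmix μ {s | σ τ0 τ1 s = a}).toReal

/-- Firm 0's expected payoff in `Γ(μ)` under mixed strategies `φ₀, φ₁` and consumer
strategy `σ`. -/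
def Pi0 (𝒮 : SignalStructure S) (μ : ℝ) (φ0 φ1 : Measure ℝ) (σ : CStrategy S) : ℝ :=
  ∫ τ, 𝒮.actProb μ σ τ.1 τ.2 CAction.buy0 * τ.1 ∂(φ0.prod φ1)

/-- Firm 1's expected payoff in `Γ(μ)`. -/
def Pi1 (𝒮 : SignalStructure S) (μ : ℝ) (φ0 φ1 : Measure ℝ) (σ : CStrategy S) : ℝ :=
  ∫ τ, 𝒮.actProb μ σ τ.1 τ.2 CAction.buy1 * τ.2 ∂(φ0.prod φ1)

/-- The probability that the consumer takes action `a` under mixed price strategies. -/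
def actProbMix (𝒮 : SignalStructure S) (μ : ℝ) (φ0 φ1 : Measure ℝ) (σ : CStrategy S)
    (a : CAction) : ℝ :=
  ∫ τ, 𝒮.actProb μ σ τ.1 τ.2 a ∂(φ0.prod φ1)

/-- A subgame perfect equilibrium of the stage game `Γ(μ)`: the consumer strategy is a
best reply to every price pair, and each firm's mixed price strategy maximizes its
expected payoff given the opponent's strategy and the consumer's strategy. -/
structure IsSPE (𝒮 : SignalStructure S) (μ : ℝ) (φ0 φ1 : Measure ℝ) (σ : CStrategy S) :
    Prop where
  strat0 : IsPriceStrategy φ0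
  strat1 : IsPriceStrategy φ1
  meas : ∀ τ0 τ1, Measurable (σ τ0 τ1)
  consumerBR : ∀ τ0 ∈ Icc (0:ℝ) 1, ∀ τ1 ∈ Icc (0:ℝ) 1,
    ∀ᵐ s ∂(𝒮.Fmix μ), ∀ a : CAction,
      cUtil (posterior μ (𝒮.p s)) τ0 τ1 a ≤ cUtil (posterior μ (𝒮.p s)) τ0 τ1 (σ τ0 τ1 s)
  firm0opt : ∀ ψ : Measure ℝ, IsPriceStrategy ψ → 𝒮.Pi0 μ ψ φ1 σ ≤ 𝒮.Pi0 μ φ0 φ1 σ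
  firm1opt : ∀ ψ : Measure ℝ, IsPriceStrategy ψ → 𝒮.Pi1 μ φ0 ψ σ ≤ 𝒮.Pi1 μ φ0 φ1 σ

/-- A deterrence equilibrium: an SPE in which some firm sells with probability zero. -/
def IsDeterrence (𝒮 : SignalStructure S) (μ : ℝ) (φ0 φ1 : Measure ℝ) (σ : CStrategy S) :
    Prop :=
  𝒮.IsSPE μ φ0 φ1 σ ∧
    (𝒮.actProbMix μ φ0 φ1 σ CAction.buy0 = 0 ∨ 𝒮.actProbMix μ φ0 φ1 σ CAction.buy1 = 0)

/-- The market is full at `(μ, σ, τ₀, τ₁)` if the consumer exits with probability zero. -/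
def MarketFull (𝒮 : SignalStructure S) (μ : ℝ) (σ : CStrategy S) (τ0 τ1 : ℝ) : Prop :=
  𝒮.Fmix μ {s | σ τ0 τ1 s = CAction.exit} = 0

open scoped Classical in
/-- The consumer's best-reply threshold `v_μ(τ₀,τ₁)` on the private belief. -/
def v (𝒮 : SignalStructure S) (μ : ℝ) (σ : CStrategy S) (τ0 τ1 : ℝ) : ℝ :=
  if 𝒮.MarketFull μ σ τ0 τ1 then
    (1 - μ) * (1 + τ0 - τ1) / (2 * μ - (2 * μ - 1) * (1 + τ0 - τ1))
  else (1 - μ) * τ0 / (μ - (2 * μ - 1) * τ0)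

end SignalStructure

/-!
As `F₀ + F₁ = 2 • ref`, the densities satisfy `f₀ + f₁ = 2` a.e., hence `f₀ = 2p` and
`f₁ = 2(1 - p)` a.e. Integrating gives `(1 - r) F₀(A) - r F₁(A) = 2 ∫_A (p - r) d ref`, which is
`≤ 0` for `A ⊆ {p < r}` and `≥ 0` for `A ⊆ {r ≤ p}`, strictly so for `r = 1/2` and `A` not null.
With `r = 1/2` this compares `G₀` and `G₁` on `{p < x}` and on its complement; with general `r`
on `{p < r}` and `{r ≤ p < r'}` it yields the monotonicity of `G₁ / G₀`.
-/

theorem MeasureTheory.setIntegral_pos_of_forall_mem_pos {α : Type*} [MeasurableSpace α]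
    {μ : Measure α} {f : α → ℝ} {s : Set α} (hs : MeasurableSet s) (hfi : IntegrableOn f s μ)
    (hf : ∀ x ∈ s, 0 < f x) (hμs : μ s ≠ 0) : 0 < ∫ x in s, f x ∂μ := by
  have hf_nonneg : 0 ≤ᵐ[μ.restrict s] f :=
    (ae_restrict_mem hs).mono fun x hx => (hf x hx).le
  have hs_support : s ⊆ Function.support f := fun x hx => (hf x hx).ne'
  rw [setIntegral_pos_iff_support_of_nonneg_ae hf_nonneg hfi, inter_eq_right.mpr hs_support]
  exact pos_iff_ne_zero.mpr hμs

theorem MeasureTheory.measureReal_lt_eq_add {α : Type*} [MeasurableSpace α]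
    (μ : Measure α) [IsFiniteMeasure μ] {f : α → ℝ} (hf : Measurable f) {r r' : ℝ}
    (hrr' : r ≤ r') :
    μ.real {x | f x < r'} = μ.real {x | f x < r} + μ.real {x | r ≤ f x ∧ f x < r'} := by
  have hunion : {x | f x < r'} = {x | f x < r} ∪ {x | r ≤ f x ∧ f x < r'} := by
    ext x
    constructor
    · intro hx
      exact (lt_or_ge (f x) r).imp id fun h => ⟨h, hx⟩
    · rintro (hx | hx)
      exacts [hx.trans_le hrr', hx.2]
  have hdisj : Disjoint {x | f x < r} {x | r ≤ f x ∧ f x < r'} :=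
    disjoint_left.mpr fun x hx hx' => (not_le.mpr hx) hx'.1
  have hmeas : MeasurableSet {x | r ≤ f x ∧ f x < r'} :=
    (measurableSet_le measurable_const hf).inter (measurableSet_lt hf measurable_const)
  rw [hunion, measureReal_union hdisj hmeas]

theorem MeasureTheory.probReal_le_eq_one_sub {α : Type*} [MeasurableSpace α]
    (μ : Measure α) [IsProbabilityMeasure μ] {f : α → ℝ} (hf : Measurable f) (r : ℝ) :
    μ.real {x | r ≤ f x} = 1 - μ.real {x | f x < r} := by
  have hcompl : {x | r ≤ f x} = {x | f x < r}ᶜ := by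
    ext x
    exact (not_lt (a := f x) (b := r)).symm
  rw [hcompl, probReal_compl_eq_one_sub (measurableSet_lt hf measurable_const)]

namespace SignalStructure

variable {S : Type} [MeasurableSpace S] (𝒮 : SignalStructure S)

instance : IsProbabilityMeasure 𝒮.F0 := 𝒮.prob0

instance : IsProbabilityMeasure 𝒮.F1 := 𝒮.prob1

theorem F0_add_F1 : 𝒮.F0 + 𝒮.F1 = (2 : ℝ≥0∞) • 𝒮.ref := by
  rw [ref, smul_smul, ENNReal.mul_inv_cancel two_ne_zero ENNReal.ofNat_ne_top, one_smul]

instance : IsProbabilityMeasure 𝒮.ref := by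
  constructor
  have h := congrArg (fun μ : Measure S => μ univ) 𝒮.F0_add_F1
  simp only [Measure.coe_add, Pi.add_apply, measure_univ, Measure.smul_apply,
    smul_eq_mul] at h
  rw [one_add_one_eq_two] at h
  exact ((ENNReal.mul_eq_left two_ne_zero ENNReal.ofNat_ne_top).mp h.symm)

theorem F0_absolutelyContinuous_ref : 𝒮.F0 ≪ 𝒮.ref :=
  (Measure.AbsolutelyContinuous.rfl.add_right 𝒮.F1).trans
    (𝒮.F0_add_F1 ▸ Measure.smul_absolutelyContinuous)

theorem F1_absolutelyContinuous_ref : 𝒮.F1 ≪ 𝒮.ref :=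
  (Measure.AbsolutelyContinuous.rfl.add_right' 𝒮.F0).trans
    (𝒮.F0_add_F1 ▸ Measure.smul_absolutelyContinuous)

theorem f0_add_f1_ae_eq : 𝒮.f0 + 𝒮.f1 =ᵐ[𝒮.ref] 2 := by
  calc 𝒮.f0 + 𝒮.f1 =ᵐ[𝒮.ref] (𝒮.F0 + 𝒮.F1).rnDeriv 𝒮.ref :=
        (Measure.rnDeriv_add' _ _ _).symm
    _ = ((2 : ℝ≥0∞) • 𝒮.ref).rnDeriv 𝒮.ref := by rw [F0_add_F1]
    _ =ᵐ[𝒮.ref] (2 : ℝ≥0∞) • 𝒮.ref.rnDeriv 𝒮.ref :=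
        Measure.rnDeriv_smul_left_of_ne_top _ _ ENNReal.ofNat_ne_top
    _ =ᵐ[𝒮.ref] 2 := (Measure.rnDeriv_self 𝒮.ref).mono fun s hs => by simp [hs]

theorem measurable_p : Measurable 𝒮.p := by
  unfold p f0 f1
  fun_prop

theorem p_nonneg (s : S) : 0 ≤ 𝒮.p s := by
  unfold p; positivity

theorem p_le_one (s : S) : 𝒮.p s ≤ 1 :=
  div_le_one_of_le₀ (le_add_of_nonneg_right ENNReal.toReal_nonneg) (by positivity)

theorem ae_toReal_f0_f1 :
    ∀ᵐ s ∂𝒮.ref, (𝒮.f0 s).toReal = 2 * 𝒮.p s ∧ (𝒮.f1 s).toReal = 2 * (1 - 𝒮.p s) := by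
  filter_upwards [𝒮.f0_add_f1_ae_eq] with s hs
  have hs' : 𝒮.f0 s + 𝒮.f1 s = 2 := hs
  have hfin := ENNReal.add_ne_top.mp (hs'.symm ▸ ENNReal.ofNat_ne_top)
  have hsum : (𝒮.f0 s).toReal + (𝒮.f1 s).toReal = 2 := by
    rw [← ENNReal.toReal_add hfin.1 hfin.2, hs', ENNReal.toReal_ofNat]
  have hp : 𝒮.p s = (𝒮.f0 s).toReal / 2 := by rw [p, hsum]
  constructor <;> linarith

theorem measureReal_F0_eq_integral (A : Set S) :
    𝒮.F0.real A = ∫ s in A, 2 * 𝒮.p s ∂𝒮.ref := by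
  rw [← Measure.setIntegral_toReal_rnDeriv 𝒮.F0_absolutelyContinuous_ref A]
  exact integral_congr_ae (ae_restrict_of_ae (𝒮.ae_toReal_f0_f1.mono fun s hs => hs.1))

theorem measureReal_F1_eq_integral (A : Set S) :
    𝒮.F1.real A = ∫ s in A, 2 * (1 - 𝒮.p s) ∂𝒮.ref := by
  rw [← Measure.setIntegral_toReal_rnDeriv 𝒮.F1_absolutelyContinuous_ref A]
  exact integral_congr_ae (ae_restrict_of_ae (𝒮.ae_toReal_f0_f1.mono fun s hs => hs.2))

theorem integrable_p : Integrable 𝒮.p 𝒮.ref :=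
  Integrable.of_bound 𝒮.measurable_p.aestronglyMeasurable 1 <| ae_of_all _ fun s => by
    rw [Real.norm_eq_abs, abs_le]
    constructor <;> linarith [𝒮.p_nonneg s, 𝒮.p_le_one s]

theorem one_sub_mul_F0_real_sub_mul_F1_real (r : ℝ) (A : Set S) :
    (1 - r) * 𝒮.F0.real A - r * 𝒮.F1.real A = 2 * ∫ s in A, (𝒮.p s - r) ∂𝒮.ref := by
  have hint0 : IntegrableOn (fun s => (1 - r) * (2 * 𝒮.p s)) A 𝒮.ref :=
    ((𝒮.integrable_p.const_mul 2).const_mul (1 - r)).integrableOn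
  have hint1 : IntegrableOn (fun s => r * (2 * (1 - 𝒮.p s))) A 𝒮.ref :=
    (((integrable_const 1).sub 𝒮.integrable_p).const_mul 2).const_mul r |>.integrableOn
  rw [measureReal_F0_eq_integral, measureReal_F1_eq_integral, ← integral_const_mul,
    ← integral_const_mul, ← integral_const_mul, ← integral_sub hint0 hint1]
  congr 1
  ext s
  ring

variable {𝒮} {A : Set S}

theorem one_sub_mul_F0_real_le_mul_F1_real {r : ℝ} (hA : MeasurableSet A)
    (hsub : A ⊆ {s | 𝒮.p s < r}) : (1 - r) * 𝒮.F0.real A ≤ r * 𝒮.F1.real A := by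
  have h := setIntegral_nonpos (μ := 𝒮.ref) hA fun s hs => sub_nonpos.mpr (hsub hs).le
  linarith [𝒮.one_sub_mul_F0_real_sub_mul_F1_real r A]

theorem mul_F1_real_le_one_sub_mul_F0_real {r : ℝ} (hA : MeasurableSet A)
    (hsub : A ⊆ {s | r ≤ 𝒮.p s}) : r * 𝒮.F1.real A ≤ (1 - r) * 𝒮.F0.real A := by
  have h := setIntegral_nonneg (μ := 𝒮.ref) hA fun s hs => sub_nonneg.mpr (hsub hs)
  linarith [𝒮.one_sub_mul_F0_real_sub_mul_F1_real r A]

theorem ref_ne_zero_of_F0_real_pos (h : 0 < 𝒮.F0.real A) : 𝒮.ref A ≠ 0 := fun hA =>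
  h.ne' ((measureReal_eq_zero_iff).mpr (𝒮.F0_absolutelyContinuous_ref hA))

theorem F0_real_lt_F1_real (hA : MeasurableSet A) (hsub : A ⊆ {s | 𝒮.p s < 1 / 2})
    (h0 : 0 < 𝒮.F0.real A) : 𝒮.F0.real A < 𝒮.F1.real A := by
  have hpos : 0 < ∫ s in A, (1 / 2 - 𝒮.p s) ∂𝒮.ref :=
    setIntegral_pos_of_forall_mem_pos hA
      ((integrable_const _).sub 𝒮.integrable_p).integrableOn
      (fun s hs => sub_pos.mpr (hsub hs)) (ref_ne_zero_of_F0_real_pos h0)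
  have hneg : ∫ s in A, (𝒮.p s - 1 / 2) ∂𝒮.ref = -∫ s in A, (1 / 2 - 𝒮.p s) ∂𝒮.ref := by
    rw [← integral_neg]
    simp_rw [neg_sub]
  linarith [𝒮.one_sub_mul_F0_real_sub_mul_F1_real (1 / 2) A]

theorem F1_real_lt_F0_real (hA : MeasurableSet A) (hsub : A ⊆ {s | 1 / 2 < 𝒮.p s})
    (h0 : 0 < 𝒮.F0.real A) : 𝒮.F1.real A < 𝒮.F0.real A := by
  have hpos : 0 < ∫ s in A, (𝒮.p s - 1 / 2) ∂𝒮.ref :=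
    setIntegral_pos_of_forall_mem_pos hA
      (𝒮.integrable_p.sub (integrable_const _)).integrableOn
      (fun s hs => sub_pos.mpr (hsub hs)) (ref_ne_zero_of_F0_real_pos h0)
  linarith [𝒮.one_sub_mul_F0_real_sub_mul_F1_real (1 / 2) A]

variable (𝒮) {r : ℝ}

theorem G0_eq_measureReal (x : ℝ) : 𝒮.G0 x = 𝒮.F0.real {s | 𝒮.p s < x} := rfl

theorem G1_eq_measureReal (x : ℝ) : 𝒮.G1 x = 𝒮.F1.real {s | 𝒮.p s < x} := rfl

theorem measurableSet_p_lt (x : ℝ) : MeasurableSet {s | 𝒮.p s < x} :=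
  measurableSet_lt 𝒮.measurable_p measurable_const

theorem measurableSet_le_p (x : ℝ) : MeasurableSet {s | x ≤ 𝒮.p s} :=
  measurableSet_le measurable_const 𝒮.measurable_p

theorem monotone_G0 : Monotone 𝒮.G0 := fun _ _ hxy =>
  measureReal_mono fun _ hs => lt_of_lt_of_le hs hxy

theorem G0_eq_zero_of_nonpos (hr : r ≤ 0) : 𝒮.G0 r = 0 := by
  have hempty : {s | 𝒮.p s < r} = ∅ :=
    eq_empty_of_forall_notMem fun s hs => (not_lt.mpr (hr.trans (𝒮.p_nonneg s))) hs
  rw [G0_eq_measureReal, hempty, measureReal_empty]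

theorem G0_eq_one_of_one_lt (hr : 1 < r) : 𝒮.G0 r = 1 := by
  have huniv : {s | 𝒮.p s < r} = univ :=
    eq_univ_of_forall fun s => (𝒮.p_le_one s).trans_lt hr
  rw [G0_eq_measureReal, huniv, probReal_univ]

variable {𝒮}

theorem pos_of_G0_pos (h : 0 < 𝒮.G0 r) : 0 < r := by
  by_contra! hr
  exact h.ne' (𝒮.G0_eq_zero_of_nonpos hr)

theorem G0_pos_of_alphaLo_lt (hr : 𝒮.alphaLo < r) : 0 < 𝒮.G0 r := by
  have hne : {x | 0 < 𝒮.G0 x}.Nonempty :=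
    ⟨2, show 0 < 𝒮.G0 2 by rw [𝒮.G0_eq_one_of_one_lt one_lt_two]; exact one_pos⟩
  obtain ⟨x, hx, hxr⟩ := exists_lt_of_csInf_lt hne hr
  exact hx.trans_le (𝒮.monotone_G0 hxr.le)

theorem G0_lt_one_of_lt_alphaHi (hr : r < 𝒮.alphaHi) : 𝒮.G0 r < 1 := by
  have hne : {x | 𝒮.G0 x < 1}.Nonempty :=
    ⟨0, show 𝒮.G0 0 < 1 by rw [𝒮.G0_eq_zero_of_nonpos le_rfl]; exact one_pos⟩
  obtain ⟨x, hx, hrx⟩ := exists_lt_of_lt_csSup hne hr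
  exact (𝒮.monotone_G0 hrx.le).trans_lt hx

variable (𝒮)

theorem antitoneOn_G1_div_G0 : AntitoneOn (fun r => 𝒮.G1 r / 𝒮.G0 r) {r | 0 < 𝒮.G0 r} := by
  intro r hr r' hr' hrr'
  set D := {s | r ≤ 𝒮.p s ∧ 𝒮.p s < r'}
  have hD : MeasurableSet D := (𝒮.measurableSet_le_p r).inter (𝒮.measurableSet_p_lt r')
  have hG0 : 𝒮.G0 r' = 𝒮.G0 r + 𝒮.F0.real D := measureReal_lt_eq_add _ 𝒮.measurable_p hrr'
  have hG1 : 𝒮.G1 r' = 𝒮.G1 r + 𝒮.F1.real D := measureReal_lt_eq_add _ 𝒮.measurable_p hrr'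
  have hbelow : (1 - r) * 𝒮.G0 r ≤ r * 𝒮.G1 r :=
    one_sub_mul_F0_real_le_mul_F1_real (𝒮.measurableSet_p_lt r) subset_rfl
  have habove : r * 𝒮.F1.real D ≤ (1 - r) * 𝒮.F0.real D :=
    mul_F1_real_le_one_sub_mul_F0_real hD fun _ hs => hs.1
  -- `F₁ D / F₀ D ≤ (1 - r) / r ≤ G₁ r / G₀ r`, and `G₁ r' / G₀ r'` is the mediant of the outer two
  have hmediant : r * (𝒮.F1.real D * 𝒮.G0 r) ≤ r * (𝒮.G1 r * 𝒮.F0.real D) := by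
    linarith [mul_le_mul_of_nonneg_right habove (le_of_lt hr),
      mul_le_mul_of_nonneg_left hbelow (measureReal_nonneg (μ := 𝒮.F0) (s := D))]
  have hcross := le_of_mul_le_mul_left hmediant (pos_of_G0_pos hr)
  dsimp only
  rw [div_le_div_iff₀ hr' hr, hG0, hG1]
  linarith

theorem G0_lt_G1_of_mem_Ioo (hr : r ∈ Ioo 𝒮.alphaLo 𝒮.alphaHi) : 𝒮.G0 r < 𝒮.G1 r := by
  rcases le_or_gt r (1 / 2) with hhalf | hhalf
  · exact F0_real_lt_F1_real (𝒮.measurableSet_p_lt r) (fun _ hs => lt_of_lt_of_le hs hhalf)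
      (G0_pos_of_alphaLo_lt hr.1)
  · have hF0 := probReal_le_eq_one_sub 𝒮.F0 𝒮.measurable_p r
    have hF1 := probReal_le_eq_one_sub 𝒮.F1 𝒮.measurable_p r
    have hlt := F1_real_lt_F0_real (𝒮.measurableSet_le_p r)
      (fun _ hs => lt_of_lt_of_le hhalf hs)
      (by rw [hF0, ← G0_eq_measureReal]; linarith [G0_lt_one_of_lt_alphaHi hr.2])
    rw [G0_eq_measureReal, G1_eq_measureReal]
    linarith

theorem G0_le_G1 (x : ℝ) : 𝒮.G0 x ≤ 𝒮.G1 x := by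
  rcases le_or_gt x (1 / 2) with hx | hx
  · have h := one_sub_mul_F0_real_le_mul_F1_real (r := 1 / 2) (𝒮.measurableSet_p_lt x)
      fun _ hs => lt_of_lt_of_le hs hx
    rw [G0_eq_measureReal, G1_eq_measureReal]
    linarith
  · have h := mul_F1_real_le_one_sub_mul_F0_real (r := 1 / 2) (𝒮.measurableSet_le_p x)
      fun _ hs => (lt_of_lt_of_le hx hs).le
    rw [G0_eq_measureReal, G1_eq_measureReal]
    linarith [probReal_le_eq_one_sub 𝒮.F0 𝒮.measurable_p x,
      probReal_le_eq_one_sub 𝒮.F1 𝒮.measurable_p x]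

end SignalStructure

/-- The ratio G₁(r)/G₀(r) is non-increasing in r on the set where
G₀(r) > 0, and G₁(r)/G₀(r) > 1 for all r ∈ (α⁻,α⁺).  In particular G₀(x) ≤ G₁(x)
for all x, i.e. G₀ first-order stochastically dominates G₁. -/
theorem stmt14 {S : Type} [MeasurableSpace S] (𝒮 : SignalStructure S) :
    (∀ r r' : ℝ, 0 < 𝒮.G0 r → 0 < 𝒮.G0 r' → r ≤ r' →
        𝒮.G1 r' / 𝒮.G0 r' ≤ 𝒮.G1 r / 𝒮.G0 r) ∧
      (∀ r ∈ Ioo 𝒮.alphaLo 𝒮.alphaHi, 1 < 𝒮.G1 r / 𝒮.G0 r) ∧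
      (∀ x : ℝ, 𝒮.G0 x ≤ 𝒮.G1 x) :=
  ⟨fun _ _ hr hr' hrr' => 𝒮.antitoneOn_G1_div_G0 hr hr' hrr',
    fun _ hr => (one_lt_div (SignalStructure.G0_pos_of_alphaLo_lt hr.1)).mpr
      (𝒮.G0_lt_G1_of_mem_Ioo hr),
    𝒮.G0_le_G1⟩
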